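/- arXiv:1905.00191 — 2 statements merged into one kernel-verified Lean document; each statement's English description precedes it below -/
import Mathlib

section
/- The function g(s) = −2e^(ε−s) + 2e^(s+ε) − e^(2ε−2s) + e^(2s) has exactly one real root, and that root lies in the open interval (0, ε/2), for every ε > 0. -/
open Real Set

theorem StrictMono.exists_unique_eq_mem_Ioo {α δ : Type*} [ConditionallyCompleteLinearOrder α]
    [TopologicalSpace α] [OrderTopology α] [DenselyOrdered α] [LinearOrder δ] [TopologicalSpace δ]
    [OrderClosedTopology δ] {f : α → δ} (hf : StrictMono f) (hc : Continuous f) {a b : α}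
    {y : δ} (ha : f a < y) (hb : y < f b) :
    ∃ s ∈ Ioo a b, f s = y ∧ ∀ t, f t = y → t = s := by
  have hab : a ≤ b := (hf.lt_iff_lt.1 (ha.trans hb)).le
  obtain ⟨s, hs, hfs⟩ := intermediate_value_Ioo hab hc.continuousOn ⟨ha, hb⟩
  exact ⟨s, hs, hfs, fun t hft => hf.injective (hft.trans hfs.symm)⟩

namespace Podium

noncomputable def g (ε s : ℝ) : ℝ :=
  -2 * exp (ε - s) + 2 * exp (s + ε) - exp (2 * ε - 2 * s) + exp (2 * s)

variable (ε : ℝ)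

theorem continuous_g : Continuous (g ε) := by
  unfold g; fun_prop

theorem strictMono_g : StrictMono (g ε) := by
  intro a b hab
  have h₁ : exp (ε - b) < exp (ε - a) := exp_lt_exp.2 (by linarith)
  have h₂ : exp (a + ε) < exp (b + ε) := exp_lt_exp.2 (by linarith)
  have h₃ : exp (2 * ε - 2 * b) < exp (2 * ε - 2 * a) := exp_lt_exp.2 (by linarith)
  have h₄ : exp (2 * a) < exp (2 * b) := exp_lt_exp.2 (by linarith)
  simp only [g]
  linarith

variable {ε}

theorem g_zero_neg (hε : 0 < ε) : g ε 0 < 0 := by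
  have : 1 < exp (2 * ε) := one_lt_exp_iff.2 (by linarith)
  simp only [g, sub_zero, zero_add, mul_zero, exp_zero]
  linarith

theorem g_half_pos (hε : 0 < ε) : 0 < g ε (ε / 2) := by
  have hsum : g ε (ε / 2) = 2 * (exp (3 * ε / 2) - exp (ε / 2)) := by
    simp only [g]; ring_nf
  rw [hsum]
  have : exp (ε / 2) < exp (3 * ε / 2) := exp_lt_exp.2 (by linarith)
  linarith

end Podium

theorem podium_g_unique_root (ε : ℝ) (hε : 0 < ε) :
    ∃ s : ℝ, (-2 * exp (ε - s) + 2 * exp (s + ε) - exp (2 * ε - 2 * s) + exp (2 * s) = 0) ∧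
      0 < s ∧ s < ε / 2 ∧
      ∀ s' : ℝ,
        -2 * exp (ε - s') + 2 * exp (s' + ε) - exp (2 * ε - 2 * s') + exp (2 * s') = 0 →
        s' = s := by
  obtain ⟨s, ⟨hs₀, hs₁⟩, hgs, huniq⟩ :=
    (Podium.strictMono_g ε).exists_unique_eq_mem_Ioo (Podium.continuous_g ε)
      (Podium.g_zero_neg hε) (Podium.g_half_pos hε)
  exact ⟨s, hgs, hs₀, hs₁, huniq⟩
end

section
/- As ε → 0⁺, the Podium variance V(ε) = (Δ²/12)·(cosh(2ε/3 − ε) + 4cosh(ε/3) + 3)/(cosh(ε) − 1) (with s = ε/3) satisfies ε²·V(ε)/Δ² → 4/3; hence the limiting relative efficiency versus the Laplace variance 2Δ²/ε² is 2/3. -/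
/-! Since `cosh ε - 1 = 2 sinh² (ε / 2)` and `sinh x / x → 1`, we have `ε² / (cosh ε - 1) → 2`,
while the numerator `cosh (2s - ε) + 4 cosh s + 3` tends to `8`; hence `ε² V(ε) / Δ² → 8 · 2 / 12`.
The efficiency ratio is exactly half of `ε² V(ε) / Δ²`. -/

open Real Filter Topology

namespace Real

theorem tendsto_sinh_div_self : Tendsto (fun x : ℝ => sinh x / x) (𝓝[≠] 0) (𝓝 1) := by
  have h := (hasDerivAt_sinh 0).tendsto_slope
  rw [cosh_zero] at h
  refine h.congr fun x => ?_
  rw [slope_def_field, sinh_zero, sub_zero, sub_zero]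

theorem cosh_sub_one_eq_two_mul_sinh_half_sq (x : ℝ) : cosh x - 1 = 2 * sinh (x / 2) ^ 2 := by
  conv_lhs => rw [← mul_div_cancel₀ x two_ne_zero, cosh_two_mul, cosh_sq]
  ring

theorem tendsto_sq_div_cosh_sub_one :
    Tendsto (fun x : ℝ => x ^ 2 / (cosh x - 1)) (𝓝[≠] 0) (𝓝 2) := by
  have hhalf : Tendsto (fun x : ℝ => x / 2) (𝓝[≠] 0) (𝓝[≠] 0) :=
    tendsto_nhdsWithin_of_tendsto_nhds_of_eventually_within _
      (((continuous_id.div_const (2 : ℝ)).tendsto' 0 0 (zero_div _)).mono_left nhdsWithin_le_nhds)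
      (eventually_mem_nhdsWithin.mono fun x hx => div_ne_zero hx two_ne_zero)
  have h := (((tendsto_sinh_div_self.comp hhalf).pow 2).inv₀ (by norm_num)).const_mul 2
  rw [one_pow, inv_one, mul_one] at h
  refine h.congr fun x => ?_
  simp only [Function.comp_apply, cosh_sub_one_eq_two_mul_sinh_half_sq, div_pow, inv_div]
  ring

end Real

theorem podium_variance_high_privacy (Δ : ℝ) (hΔ : 0 < Δ) :
    Tendsto
      (fun ε : ℝ =>
        ε ^ 2 * ((Δ ^ 2 / 12) * (cosh (2 * (ε / 3) - ε) + 4 * cosh (ε / 3) + 3) /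
          (cosh ε - 1)) / Δ ^ 2)
      (nhdsWithin 0 (Set.Ioi 0)) (nhds (4 / 3)) ∧
    Tendsto
      (fun ε : ℝ =>
        ((Δ ^ 2 / 12) * (cosh (2 * (ε / 3) - ε) + 4 * cosh (ε / 3) + 3) / (cosh ε - 1)) /
          (2 * Δ ^ 2 / ε ^ 2))
      (nhdsWithin 0 (Set.Ioi 0)) (nhds (2 / 3)) := by
  have hΔ2 : Δ ^ 2 ≠ 0 := by positivity
  have hnum : Tendsto (fun ε : ℝ => cosh (2 * (ε / 3) - ε) + 4 * cosh (ε / 3) + 3) (𝓝 0) (𝓝 8) :=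
    (by fun_prop : Continuous _).tendsto' 0 8 (by norm_num)
  have hscaled := ((hnum.mono_left nhdsWithin_le_nhds).mul
    (tendsto_sq_div_cosh_sub_one.mono_left (nhdsGT_le_nhdsNE 0))).const_mul (1 / 12)
  rw [show (1 / 12 : ℝ) * (8 * 2) = 4 / 3 by norm_num] at hscaled
  have key : Tendsto (fun ε : ℝ => ε ^ 2 * ((Δ ^ 2 / 12) *
      (cosh (2 * (ε / 3) - ε) + 4 * cosh (ε / 3) + 3) / (cosh ε - 1)) / Δ ^ 2)
      (𝓝[>] 0) (𝓝 (4 / 3)) :=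
    hscaled.congr fun ε => by field_simp
  refine ⟨key, ?_⟩
  rw [show (2 / 3 : ℝ) = 4 / 3 / 2 by norm_num]
  refine (key.div_const 2).congr fun ε => ?_
  rw [div_div_eq_mul_div]
  ring
end
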